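/- arXiv:2506.20276 — 6 statements merged into one kernel-verified Lean document; each statement's English description precedes it below -/
import Mathlib

section
/- Let (g,B,S) be a finite-dimensional quadratic Rota–Baxter Lie algebra of weight λ over a field K, let I_S : Dual(g) → g be the inverse of the linear isomorphism g → Dual(g), x ↦ S(x,·), and let τ be a reflection on (g,B,S). Then (τ − id) ∘ (B + λ·id) ∘ I_S ∘ (τ* − id) = 0, where τ* : Dual(g) → Dual(g) is ξ ↦ ξ∘τ. (This is the operator form of the classical reflection equation: for λ = 0 it says τ solves the classical reflection equation for the triangular r-matrix with r₊ = B∘I_S, and for λ ≠ 0, after multiplying by λ⁻¹, for the factorizable r-matrix with r₊ = λ⁻¹(B+λ·id)∘I_S.) -/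
theorem LinearMap.comp_sub_self_eq_of_skew {R M : Type*} [CommRing R] [AddCommGroup M]
    [Module R M] (S : M →ₗ[R] M →ₗ[R] R) (τ : M →ₗ[R] M)
    (hτ : ∀ x y : M, S (τ x) y + S x (τ y) = 0) (ξ : Module.Dual R M) (x : M)
    (hx : ∀ y : M, S x y = ξ y) :
    ξ ∘ₗ τ - ξ = S (-(τ x + x)) := by
  ext y
  simp only [LinearMap.sub_apply, LinearMap.comp_apply, map_neg, map_add, LinearMap.neg_apply,
    LinearMap.add_apply]
  linear_combination hx y - hx (τ y) + hτ x y

theorem stmt0_general (K g : Type*) [Field K] [LieRing g] [LieAlgebra K g]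
    (lam : K) (B : g →ₗ[K] g) (S : g →ₗ[K] g →ₗ[K] K)
    -- `I_S` is the inverse of the isomorphism `x ↦ S(x,·)`
    (IS : Module.Dual K g →ₗ[K] g)
    (hIS : ∀ (ξ : Module.Dual K g) (y : g), S (IS ξ) y = ξ y)
    (hIS' : ∀ x : g, IS (S x) = x)
    -- `τ` is a reflection: a Lie algebra automorphism with
    -- `(τ−id)∘(B+lam·id)∘(τ+id) = 0` and `S(τx,y)+S(x,τy)=0`
    (τ : g ≃ₗ[K] g)
    (hτ1 : ∀ x : g, τ (B (τ x + x) + lam • (τ x + x)) - (B (τ x + x) + lam • (τ x + x)) = 0)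
    (hτS : ∀ x y : g, S (τ x) y + S x (τ y) = 0) :
    ∀ ξ : Module.Dual K g,
      τ (B (IS (ξ ∘ₗ (τ : g →ₗ[K] g) - ξ)) + lam • IS (ξ ∘ₗ (τ : g →ₗ[K] g) - ξ))
        - (B (IS (ξ ∘ₗ (τ : g →ₗ[K] g) - ξ)) + lam • IS (ξ ∘ₗ (τ : g →ₗ[K] g) - ξ)) = 0 := by
  intro ξ
  have hpull : IS (ξ ∘ₗ (τ : g →ₗ[K] g) - ξ) = -(τ (IS ξ) + IS ξ) := by
    rw [LinearMap.comp_sub_self_eq_of_skew S τ hτS ξ (IS ξ) (hIS ξ), hIS']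
    rfl
  rw [hpull, map_neg, smul_neg, ← neg_add, map_neg, neg_sub_neg, ← neg_sub, hτ1, neg_zero]

/-- For a finite-dimensional quadratic Rota–Baxter Lie algebra `(g, B, S)`
of weight `lam` with a reflection `τ`, the operator identity
`(τ − id) ∘ (B + lam·id) ∘ I_S ∘ (τ* − id) = 0` holds, where `I_S` is the inverse of
`x ↦ S(x, ·)` and `τ* ξ = ξ ∘ τ`. -/
theorem stmt0 (K g : Type*) [Field K] [LieRing g] [LieAlgebra K g] [FiniteDimensional K g]
    (lam : K) (B : g →ₗ[K] g) (S : g →ₗ[K] g →ₗ[K] K)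
    -- `B` is a Rota–Baxter operator of weight `lam`
    (hB : ∀ x y : g, ⁅B x, B y⁆ = B (⁅B x, y⁆ + ⁅x, B y⁆ + lam • ⁅x, y⁆))
    -- `S` is symmetric, nondegenerate, invariant
    (hSsymm : ∀ x y : g, S x y = S y x)
    (hSnondeg : ∀ x : g, (∀ y : g, S x y = 0) → x = 0)
    (hSinv : ∀ x y z : g, S ⁅x, y⁆ z + S y ⁅x, z⁆ = 0)
    -- compatibility of `S` and `B`
    (hSB : ∀ x y : g, S x (B y) + S (B x) y + lam * S x y = 0)
    -- `I_S` is the inverse of the isomorphism `x ↦ S(x,·)`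
    (IS : Module.Dual K g →ₗ[K] g)
    (hIS : ∀ (ξ : Module.Dual K g) (y : g), S (IS ξ) y = ξ y)
    (hIS' : ∀ x : g, IS (S x) = x)
    -- `τ` is a reflection: a Lie algebra automorphism with
    -- `(τ−id)∘(B+lam·id)∘(τ+id) = 0` and `S(τx,y)+S(x,τy)=0`
    (τ : g ≃ₗ[K] g)
    (hτbr : ∀ x y : g, τ ⁅x, y⁆ = ⁅τ x, τ y⁆)
    (hτ1 : ∀ x : g, τ (B (τ x + x) + lam • (τ x + x)) - (B (τ x + x) + lam • (τ x + x)) = 0)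
    (hτS : ∀ x y : g, S (τ x) y + S x (τ y) = 0) :
    ∀ ξ : Module.Dual K g,
      τ (B (IS (ξ ∘ₗ (τ : g →ₗ[K] g) - ξ)) + lam • IS (ξ ∘ₗ (τ : g →ₗ[K] g) - ξ))
        - (B (IS (ξ ∘ₗ (τ : g →ₗ[K] g) - ξ)) + lam • IS (ξ ∘ₗ (τ : g →ₗ[K] g) - ξ)) = 0 :=
  stmt0_general K g lam B S IS hIS hIS' τ hτ1 hτS
end

section
/- Let (g,B,S) be a finite-dimensional quadratic Rota–Baxter Lie algebra of weight λ over a field and let τ be a reflection on (g,B,S). Then ℌ⁰ ⋈ ℌ is a Lie subalgebra of g_B ⋈ g; concretely, besides ⁅x,y⁆_B ∈ ℌ⁰ for x,y ∈ ℌ⁰, ⁅u,w⁆ ∈ ℌ for u,w ∈ ℌ, and ⁅x,u⁆ ∈ ℌ⁰ for x ∈ ℌ⁰, u ∈ ℌ, one has ⁅Bx,u⁆ − B⁅x,u⁆ ∈ ℌ for all x ∈ ℌ⁰ and u ∈ ℌ. -/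
/-- For a reflection `τ` on a finite-dimensional quadratic Rota–Baxter Lie
algebra `(g,B,S)` of weight `lam`, the space `ℌ⁰ ⋈ ℌ` is a Lie subalgebra of `g_B ⋈ g`:
`ℌ⁰` is closed under the descendent bracket, `ℌ` is closed under the bracket of `g`,
`⁅ℌ⁰,ℌ⁆ ⊆ ℌ⁰`, and `⁅Bx,u⁆ − B⁅x,u⁆ ∈ ℌ` for all `x ∈ ℌ⁰`, `u ∈ ℌ`. -/
theorem stmt3 (K g : Type*) [Field K] [LieRing g] [LieAlgebra K g] [FiniteDimensional K g]
    (lam : K) (B : g →ₗ[K] g) (S : g →ₗ[K] g →ₗ[K] K)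
    (hB : ∀ x y : g, ⁅B x, B y⁆ = B (⁅B x, y⁆ + ⁅x, B y⁆ + lam • ⁅x, y⁆))
    (hSsymm : ∀ x y : g, S x y = S y x)
    (hSnondeg : ∀ x : g, (∀ y : g, S x y = 0) → x = 0)
    (hSinv : ∀ x y z : g, S ⁅x, y⁆ z + S y ⁅x, z⁆ = 0)
    (hSB : ∀ x y : g, S x (B y) + S (B x) y + lam * S x y = 0)
    (τ : g ≃ₗ[K] g)
    (hτbr : ∀ x y : g, τ ⁅x, y⁆ = ⁅τ x, τ y⁆)
    (hτ1 : ∀ x : g, τ (B (τ x + x) + lam • (τ x + x)) - (B (τ x + x) + lam • (τ x + x)) = 0)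
    (hτS : ∀ x y : g, S (τ x) y + S x (τ y) = 0) :
    -- `⁅x,y⁆_B ∈ ℌ⁰` for `x, y ∈ ℌ⁰`
    (∀ x y : g, (∀ u : g, τ u = u → S x u = 0) → (∀ u : g, τ u = u → S y u = 0) →
      ∀ u : g, τ u = u → S (⁅B x, y⁆ + ⁅x, B y⁆ + lam • ⁅x, y⁆) u = 0) ∧
    -- `⁅u,w⁆ ∈ ℌ` for `u, w ∈ ℌ`
    (∀ u w : g, τ u = u → τ w = w → τ ⁅u, w⁆ = ⁅u, w⁆) ∧
    -- `⁅x,u⁆ ∈ ℌ⁰` for `x ∈ ℌ⁰`, `u ∈ ℌ`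
    (∀ x u : g, (∀ w : g, τ w = w → S x w = 0) → τ u = u →
      ∀ w : g, τ w = w → S ⁅x, u⁆ w = 0) ∧
    -- `⁅Bx,u⁆ − B⁅x,u⁆ ∈ ℌ` for `x ∈ ℌ⁰`, `u ∈ ℌ`
    (∀ x u : g, (∀ w : g, τ w = w → S x w = 0) → τ u = u →
      τ (⁅B x, u⁆ - B ⁅x, u⁆) = ⁅B x, u⁆ - B ⁅x, u⁆) := by
  -- `S` as a bilinear form is reflexive and nondegenerate
  have hrefl : S.IsRefl := fun x y h => by rw [hSsymm]; exact h
  have hnd : LinearMap.BilinForm.Nondegenerate S := hrefl.nondegenerate_iff_separatingLeft.mpr hSnondeg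
  -- Key fact: `ℌ⁰ ⊆ im (τ + 1)`
  have key : ∀ x : g, (∀ u : g, τ u = u → S x u = 0) → ∃ z : g, τ z + z = x := by
    intro x hx
    have hmem : x ∈ LinearMap.BilinForm.orthogonal S
        (LinearMap.BilinForm.orthogonal S
          (LinearMap.range (τ.toLinearMap + LinearMap.id))) := by
      rw [LinearMap.BilinForm.mem_orthogonal_iff]
      intro n hn
      rw [LinearMap.BilinForm.mem_orthogonal_iff] at hn
      have hn' : ∀ z : g, S (τ z + z) n = 0 := fun z => hn (τ z + z) ⟨z, rfl⟩
      have hτn : τ n = n := by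
        have h0 : ∀ z : g, S (n - τ n) z = 0 := by
          intro z
          have h1 := hτS z n
          have h2 := hn' z
          rw [map_add, LinearMap.add_apply] at h2
          have h3 : S z (n - τ n) = 0 := by
            rw [map_sub]
            linear_combination h2 - h1
          rw [hSsymm]; exact h3
        have h4 := sub_eq_zero.mp (hSnondeg _ h0)
        exact h4.symm
      show S n x = 0
      rw [hSsymm]; exact hx n hτn
    rw [LinearMap.BilinForm.orthogonal_orthogonal hnd hrefl] at hmem
    obtain ⟨z, hz⟩ := hmem
    exact ⟨z, hz⟩
  -- `τ` fixes `(B + lam) x` for `x ∈ ℌ⁰`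
  have hC : ∀ x : g, (∀ u : g, τ u = u → S x u = 0) →
      τ (B x + lam • x) = B x + lam • x := by
    intro x hx
    obtain ⟨z, hz⟩ := key x hx
    have := hτ1 z
    rw [hz] at this
    exact sub_eq_zero.mp this
  -- Part 2
  have part2 : ∀ u w : g, τ u = u → τ w = w → τ ⁅u, w⁆ = ⁅u, w⁆ := by
    intro u w hu hw; rw [hτbr, hu, hw]
  -- Part 3
  have part3 : ∀ x u : g, (∀ w : g, τ w = w → S x w = 0) → τ u = u →
      ∀ w : g, τ w = w → S ⁅x, u⁆ w = 0 := by
    intro x u hx hu w hw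
    have e := hSinv u x w
    have hskew : S ⁅x, u⁆ w = - S ⁅u, x⁆ w := by
      rw [(lie_skew x u).symm.trans (neg_neg _).symm, neg_neg, map_neg,
        LinearMap.neg_apply]
    have hxw : S x ⁅u, w⁆ = 0 := hx _ (part2 u w hu hw)
    linear_combination hskew - e + hxw
  -- Part 4
  have part4 : ∀ x u : g, (∀ w : g, τ w = w → S x w = 0) → τ u = u →
      τ (⁅B x, u⁆ - B ⁅x, u⁆) = ⁅B x, u⁆ - B ⁅x, u⁆ := by
    intro x u hx hu
    have h1 : τ (B x + lam • x) = B x + lam • x := hC x hx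
    have h2 : τ (B ⁅x, u⁆ + lam • ⁅x, u⁆) = B ⁅x, u⁆ + lam • ⁅x, u⁆ :=
      hC ⁅x, u⁆ (part3 x u hx hu)
    have h3 : τ ⁅B x + lam • x, u⁆ = ⁅B x + lam • x, u⁆ := by
      rw [hτbr, h1, hu]
    have e : ⁅B x, u⁆ - B ⁅x, u⁆ =
        ⁅B x + lam • x, u⁆ - (B ⁅x, u⁆ + lam • ⁅x, u⁆) := by
      rw [add_lie, smul_lie]; abel
    rw [e, map_sub, h3, h2]
  refine ⟨?_, part2, part3, part4⟩
  -- Part 1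
  intro x y hx hy u hu
  have e1 := hSinv y (B x) u
  have e2 := hSinv (B y) x u
  have e3 := hSinv y x u
  have e4 := hSB x ⁅y, u⁆
  have e5 : S x ⁅B y, u⁆ - S x (B ⁅y, u⁆) = 0 := by
    have h := hx _ (part4 y u hy hu)
    rw [map_sub] at h
    exact h
  have sk : ∀ a b : g, S ⁅a, b⁆ u = - S ⁅b, a⁆ u := by
    intro a b
    rw [(lie_skew a b).symm.trans (neg_neg _).symm, neg_neg, map_neg,
      LinearMap.neg_apply]
  have s1 := sk (B x) y
  have s2 := sk x (B y)
  have s3 := sk x y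
  have expand : S (⁅B x, y⁆ + ⁅x, B y⁆ + lam • ⁅x, y⁆) u
      = S ⁅B x, y⁆ u + S ⁅x, B y⁆ u + lam * S ⁅x, y⁆ u := by
    simp [map_add, LinearMap.add_apply, map_smul, LinearMap.smul_apply, smul_eq_mul]
  rw [expand]
  linear_combination s1 + s2 + lam * s3 - e1 - e2 - lam * e3 + e4 + e5
end

section
/- Let (g,B,S) be a quadratic Rota–Baxter Lie algebra of weight λ over a field of characteristic ≠ 2 and let τ : g → g be an involutive Lie algebra automorphism (τ∘τ = id), with eigenspaces ℌ := ker(τ − id) and 𝔭 := ker(τ + id). Then: (τ−id)∘(B+λ·id)∘(τ+id) = 0 holds if and only if B(ℌ) ⊆ ℌ; and S(τx,y) + S(x,τy) = 0 for all x,y holds if and only if S vanishes identically on ℌ×ℌ and on 𝔭×𝔭. Consequently, τ is a reflection on (g,B,S) if and only if B(ℌ) ⊆ ℌ and both ℌ and 𝔭 are isotropic for S. -/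
/-!
Everything follows from the eigenspace decomposition of an involution in characteristic ≠ 2.
The fixed space `ℌ` is exactly the image of `τ + id` (a fixed `x` is `(τ + id)(x/2)`), so the
first condition says that `B + lam·id`, equivalently `B`, maps `ℌ` into itself. For the second,
`S(τx, y) + S(x, τy) = (c + d) S(x, y)` on eigenvectors of eigenvalues `c, d`, which kills
`S` on `ℌ × ℌ` and `𝔭 × 𝔭`; conversely, since `x ± τx` lie in `ℌ` resp. `𝔭`, isotropy and
`S(x+τx, y+τy) − S(x−τx, y−τy) = 2(S(τx, y) + S(x, τy))` give skewness.
-/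

section Involution

variable {V F : Type*} [AddCommGroup V] [FunLike F V V] {τ : F}

theorem involution_apply_add_self [AddMonoidHomClass F V V] (hτ : ∀ x, τ (τ x) = x) (x : V) :
    τ (τ x + x) = τ x + x := by
  rw [map_add, hτ, add_comm]

theorem involution_apply_sub_self [AddMonoidHomClass F V V] (hτ : ∀ x, τ (τ x) = x) (x : V) :
    τ (x - τ x) = -(x - τ x) := by
  rw [map_sub, hτ, neg_sub]

theorem forall_add_self_iff_forall_fixed {K : Type*} [DivisionRing K] [Module K V]
    [LinearMapClass F K V V] (h2 : (2 : K) ≠ 0) (hτ : ∀ x, τ (τ x) = x)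
    {P : V → Prop} : (∀ x, P (τ x + x)) ↔ ∀ x, τ x = x → P x := by
  refine ⟨fun hP x hx => ?_, fun hP x => hP _ (involution_apply_add_self hτ x)⟩
  have hhalf : τ ((2⁻¹ : K) • x) + (2⁻¹ : K) • x = x := by
    rw [map_smul, hx, ← add_smul, ← two_mul, mul_inv_cancel₀ h2, one_smul]
  simpa only [hhalf] using hP ((2⁻¹ : K) • x)

end Involution

section Bilinear

variable {K V F : Type*} [Field K] [AddCommGroup V] [Module K V] [FunLike F V V] {τ : F}
  (S : V →ₗ[K] V →ₗ[K] K)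

theorem apply_eq_zero_of_skew_of_eigen (hS : ∀ x y, S (τ x) y + S x (τ y) = 0) {c d : K}
    (hcd : c + d ≠ 0) {x y : V} (hx : τ x = c • x) (hy : τ y = d • y) : S x y = 0 := by
  have h : (c + d) * S x y = 0 := by
    rw [← hS x y, hx, hy, map_smul, map_smul, LinearMap.smul_apply, smul_eq_mul, smul_eq_mul,
      add_mul]
  exact (mul_eq_zero.mp h).resolve_left hcd

theorem skew_of_isotropic_eigenspaces [AddMonoidHomClass F V V] (h2 : (2 : K) ≠ 0)
    (hτ : ∀ x, τ (τ x) = x)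
    (hfix : ∀ x y, τ x = x → τ y = y → S x y = 0)
    (hneg : ∀ x y, τ x = -x → τ y = -y → S x y = 0) (x y : V) :
    S (τ x) y + S x (τ y) = 0 := by
  have hplus := hfix _ _ (involution_apply_add_self hτ x) (involution_apply_add_self hτ y)
  have hminus := hneg _ _ (involution_apply_sub_self hτ x) (involution_apply_sub_self hτ y)
  simp only [map_add, map_sub, LinearMap.add_apply, LinearMap.sub_apply] at hplus hminus
  have h : (2 : K) * (S (τ x) y + S x (τ y)) = 0 := by linear_combination hplus - hminus
  exact (mul_eq_zero.mp h).resolve_left h2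

theorem skew_iff_isotropic_eigenspaces [AddMonoidHomClass F V V] (h2 : (2 : K) ≠ 0)
    (hτ : ∀ x, τ (τ x) = x) :
    (∀ x y, S (τ x) y + S x (τ y) = 0) ↔
      (∀ x y, τ x = x → τ y = y → S x y = 0) ∧ (∀ x y, τ x = -x → τ y = -y → S x y = 0) := by
  refine ⟨fun hS => ⟨fun x y hx hy => ?_, fun x y hx hy => ?_⟩,
    fun ⟨hfix, hneg⟩ => skew_of_isotropic_eigenspaces S h2 hτ hfix hneg⟩
  · refine apply_eq_zero_of_skew_of_eigen S hS (c := 1) (d := 1) ?_ ?_ ?_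
    · rwa [one_add_one_eq_two]
    · rwa [one_smul]
    · rwa [one_smul]
  · refine apply_eq_zero_of_skew_of_eigen S hS (c := -1) (d := -1) ?_ ?_ ?_
    · rwa [← neg_add, neg_ne_zero, one_add_one_eq_two]
    · rwa [neg_one_smul]
    · rwa [neg_one_smul]

end Bilinear

theorem stmt4_general (K g : Type*) [Field K] [LieRing g] [LieAlgebra K g]
    (htwo : (2 : K) ≠ 0)
    (lam : K) (B : g →ₗ[K] g) (S : g →ₗ[K] g →ₗ[K] K)
    (τ : g ≃ₗ[K] g)
    (hτinv : ∀ x : g, τ (τ x) = x) :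
    -- first equivalence
    ((∀ x : g, τ (B (τ x + x) + lam • (τ x + x)) = B (τ x + x) + lam • (τ x + x)) ↔
      (∀ x : g, τ x = x → τ (B x) = B x)) ∧
    -- second equivalence
    ((∀ x y : g, S (τ x) y + S x (τ y) = 0) ↔
      ((∀ x y : g, τ x = x → τ y = y → S x y = 0) ∧
       (∀ x y : g, τ x = -x → τ y = -y → S x y = 0))) ∧
    -- consequently: `τ` is a reflection iff `B(ℌ) ⊆ ℌ` and `ℌ`, `𝔭` are isotropic
    (((∀ x : g, τ (B (τ x + x) + lam • (τ x + x)) = B (τ x + x) + lam • (τ x + x)) ∧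
      (∀ x y : g, S (τ x) y + S x (τ y) = 0)) ↔
      ((∀ x : g, τ x = x → τ (B x) = B x) ∧
       (∀ x y : g, τ x = x → τ y = y → S x y = 0) ∧
       (∀ x y : g, τ x = -x → τ y = -y → S x y = 0))) := by
  have hB : (∀ x : g, τ (B (τ x + x) + lam • (τ x + x)) = B (τ x + x) + lam • (τ x + x)) ↔
      (∀ x : g, τ x = x → τ (B x) = B x) := by
    refine (forall_add_self_iff_forall_fixed htwo hτinv
      (P := fun y => τ (B y + lam • y) = B y + lam • y)).trans ?_
    refine forall_congr' fun x => imp_congr_right fun hx => ?_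
    rw [map_add, map_smul, hx, add_left_inj]
  have hS := skew_iff_isotropic_eigenspaces S htwo hτinv
  exact ⟨hB, hS, by rw [hB, hS]⟩

/-- Let `(g,B,S)` be a quadratic Rota–Baxter Lie algebra of weight `lam`
over a field of characteristic ≠ 2, and `τ` an involutive Lie algebra automorphism with
`ℌ = ker(τ − id)` and `𝔭 = ker(τ + id)`. Then `(τ−id)∘(B+lam·id)∘(τ+id) = 0` iff
`B(ℌ) ⊆ ℌ`; `S(τx,y)+S(x,τy) = 0` for all `x,y` iff `S` vanishes on `ℌ×ℌ` and `𝔭×𝔭`;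
consequently `τ` is a reflection iff `B(ℌ) ⊆ ℌ` and both `ℌ` and `𝔭` are isotropic. -/
theorem stmt4 (K g : Type*) [Field K] [LieRing g] [LieAlgebra K g]
    (htwo : (2 : K) ≠ 0)
    (lam : K) (B : g →ₗ[K] g) (S : g →ₗ[K] g →ₗ[K] K)
    (hB : ∀ x y : g, ⁅B x, B y⁆ = B (⁅B x, y⁆ + ⁅x, B y⁆ + lam • ⁅x, y⁆))
    (hSsymm : ∀ x y : g, S x y = S y x)
    (hSnondeg : ∀ x : g, (∀ y : g, S x y = 0) → x = 0)
    (hSinv : ∀ x y z : g, S ⁅x, y⁆ z + S y ⁅x, z⁆ = 0)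
    (hSB : ∀ x y : g, S x (B y) + S (B x) y + lam * S x y = 0)
    (τ : g ≃ₗ[K] g)
    (hτbr : ∀ x y : g, τ ⁅x, y⁆ = ⁅τ x, τ y⁆)
    (hτinv : ∀ x : g, τ (τ x) = x) :
    -- first equivalence
    ((∀ x : g, τ (B (τ x + x) + lam • (τ x + x)) = B (τ x + x) + lam • (τ x + x)) ↔
      (∀ x : g, τ x = x → τ (B x) = B x)) ∧
    -- second equivalence
    ((∀ x y : g, S (τ x) y + S x (τ y) = 0) ↔
      ((∀ x y : g, τ x = x → τ y = y → S x y = 0) ∧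
       (∀ x y : g, τ x = -x → τ y = -y → S x y = 0))) ∧
    -- consequently: `τ` is a reflection iff `B(ℌ) ⊆ ℌ` and `ℌ`, `𝔭` are isotropic
    (((∀ x : g, τ (B (τ x + x) + lam • (τ x + x)) = B (τ x + x) + lam • (τ x + x)) ∧
      (∀ x y : g, S (τ x) y + S x (τ y) = 0)) ↔
      ((∀ x : g, τ x = x → τ (B x) = B x) ∧
       (∀ x y : g, τ x = x → τ y = y → S x y = 0) ∧
       (∀ x y : g, τ x = -x → τ y = -y → S x y = 0))) :=
  stmt4_general K g htwo lam B S τ hτinv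
end

section
/- Let B be a Rota–Baxter operator of weight λ on a Lie algebra g over a field. On the direct product Lie algebra g × g (componentwise bracket), the map B̂(u,x) := (Bu − (B+λ·id)x, Bu − (B+λ·id)x) is a Rota–Baxter operator of weight λ. -/
/-!
Both coordinates of `B̂ (u, x)` equal `ψ (u, x) := B (u - x) - λ x`. For `a = (u, x)` and
`b = (v, y)`, let `P` and `Q` be the coordinates of `⁅B̂ a, b⁆ + ⁅a, B̂ b⁆ + λ ⁅a, b⁆`; the claim
is `⁅ψ a, ψ b⁆ = B P - (B + λ) Q = B (P - Q) - λ Q`. With `s = u - x` and `t = v - y`,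
bilinearity gives `P - Q = ⁅B s, t⁆ + ⁅s, B t⁆ + λ ⁅s, t⁆`, so `B (P - Q) = ⁅B s, B t⁆` by the
Rota–Baxter identity, while `⁅B s - λ x, B t - λ y⁆ - ⁅B s, B t⁆ = -λ Q`.
-/

/-- The componentwise bracket on the direct product Lie algebra `g × g`. -/
def prodBracket {K : Type*} [Field K] {g : Type*} [LieRing g] [LieAlgebra K g]
    (a b : g × g) : g × g :=
  (⁅a.1, b.1⁆, ⁅a.2, b.2⁆)

section RotaBaxter

variable {R L : Type*} [CommRing R] [LieRing L] [LieAlgebra R L]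

def IsRotaBaxter (lam : R) (B : L →ₗ[R] L) : Prop :=
  ∀ x y : L, ⁅B x, B y⁆ = B (⁅B x, y⁆ + ⁅x, B y⁆ + lam • ⁅x, y⁆)

lemma IsRotaBaxter.lie_sub_add_smul {lam : R} {B : L →ₗ[R] L} (hB : IsRotaBaxter lam B)
    (u x v y : L) :
    ⁅B u - (B x + lam • x), B v - (B y + lam • y)⁆ =
      B (⁅B u - (B x + lam • x), v⁆ + ⁅u, B v - (B y + lam • y)⁆ + lam • ⁅u, v⁆) -
        (B (⁅B u - (B x + lam • x), y⁆ + ⁅x, B v - (B y + lam • y)⁆ + lam • ⁅x, y⁆) +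
          lam • (⁅B u - (B x + lam • x), y⁆ + ⁅x, B v - (B y + lam • y)⁆ + lam • ⁅x, y⁆)) := by
  have hψ : ∀ u x : L, B u - (B x + lam • x) = B (u - x) - lam • x := fun u x => by
    rw [map_sub]; abel
  simp only [hψ]
  set P := ⁅B (u - x) - lam • x, v⁆ + ⁅u, B (v - y) - lam • y⁆ + lam • ⁅u, v⁆
  set Q := ⁅B (u - x) - lam • x, y⁆ + ⁅x, B (v - y) - lam • y⁆ + lam • ⁅x, y⁆
  have hPQ : P - Q = ⁅B (u - x), v - y⁆ + ⁅u - x, B (v - y)⁆ + lam • ⁅u - x, v - y⁆ := by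
    simp only [P, Q, lie_sub, sub_lie, lie_smul, smul_lie]
    module
  calc ⁅B (u - x) - lam • x, B (v - y) - lam • y⁆
      = ⁅B (u - x), B (v - y)⁆ - lam • Q := by
        simp only [Q, lie_sub, sub_lie, lie_smul, smul_lie]
        module
    _ = B (P - Q) - lam • Q := by rw [hPQ, hB]

end RotaBaxter

/-- If `B` is a Rota–Baxter operator of weight `lam` on a Lie algebra `g`,
then `B̂(u,x) := (Bu − (B+lam·id)x, Bu − (B+lam·id)x)` is a Rota–Baxter operator of weight
`lam` on the direct product Lie algebra `g × g` with the componentwise bracket. -/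
theorem stmt5 (K g : Type*) [Field K] [LieRing g] [LieAlgebra K g]
    (lam : K) (B : g →ₗ[K] g)
    (hB : ∀ x y : g, ⁅B x, B y⁆ = B (⁅B x, y⁆ + ⁅x, B y⁆ + lam • ⁅x, y⁆))
    (Bhat : g × g → g × g)
    (hBhat : ∀ a : g × g, Bhat a = (B a.1 - (B a.2 + lam • a.2), B a.1 - (B a.2 + lam • a.2))) :
    ∀ a b : g × g,
      prodBracket (K := K) (Bhat a) (Bhat b) =
        Bhat (prodBracket (K := K) (Bhat a) b + prodBracket (K := K) a (Bhat b) +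
          lam • prodBracket (K := K) a b) := by
  rintro ⟨u, x⟩ ⟨v, y⟩
  have key := IsRotaBaxter.lie_sub_add_smul (R := K) hB u x v y
  simp only [hBhat, prodBracket, Prod.smul_mk, Prod.mk_add_mk]
  exact Prod.ext key key
end

section
/- Let B be a Rota–Baxter operator of weight λ on a Lie algebra g over a field. Then: (a) the semidirect bracket ⁅(x,ξ),(y,η)⁆ := (⁅x,y⁆, ad*_x η − ad*_y ξ) on g × Dual(g) is a Lie bracket; (b) B̃(x,ξ) := (Bx, −λξ − ξ∘B) is a Rota–Baxter operator of weight λ for this bracket; (c) the pairing 𝒮((x,ξ),(y,η)) := η(x) + ξ(y) is symmetric, nondegenerate and invariant, and satisfies 𝒮(B̃a,b) + 𝒮(a,B̃b) + λ𝒮(a,b) = 0 for all a,b. Hence (g ⋉_{ad*} Dual(g), B̃, 𝒮) is a quadratic Rota–Baxter Lie algebra of weight λ. -/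
/-!
Every identity is checked componentwise, evaluating the dual component at a point `z : g`.
Since `(ad*_x ξ) z = -ξ ⁅x, z⁆`, the Jacobi identity and the invariance of `𝒮` reduce to the
Jacobi identity and skew-symmetry in `g`. In the Rota–Baxter identity for `B̃`, the dual
component at `z` is `η` applied to the Rota–Baxter identity of `B` at `(x, z)` minus `ξ`
applied to it at `(y, z)`.
-/

variable {K : Type*} [Field K] {g : Type*} [LieRing g] [LieAlgebra K g]

/-- Coadjoint action `ad*_x ξ = −ξ ∘ (ad x)` on the dual space. -/
noncomputable def coad (x : g) (ξ : Module.Dual K g) : Module.Dual K g :=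
  -(ξ ∘ₗ (LieAlgebra.ad K g x : g →ₗ[K] g))

/-- The semidirect bracket `⁅(x,ξ),(y,η)⁆ = (⁅x,y⁆, ad*_x η − ad*_y ξ)` on `g × Dual g`. -/
noncomputable def sdBracket (a b : g × Module.Dual K g) : g × Module.Dual K g :=
  (⁅a.1, b.1⁆, coad a.1 b.2 - coad b.1 a.2)

/-- The operator `B̃(x,ξ) = (Bx, −lam ξ − ξ∘B)` on `g × Dual g`. -/
noncomputable def Btilde (lam : K) (B : g →ₗ[K] g) (a : g × Module.Dual K g) :
    g × Module.Dual K g :=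
  (B a.1, -(lam • a.2) - a.2 ∘ₗ B)

/-- The pairing `𝒮((x,ξ),(y,η)) = η(x) + ξ(y)` on `g × Dual g`. -/
noncomputable def Spair (a b : g × Module.Dual K g) : K :=
  b.2 a.1 + a.2 b.1

@[simp]
theorem coad_apply (x : g) (ξ : Module.Dual K g) (z : g) : coad x ξ z = -ξ ⁅x, z⁆ := rfl

@[simp]
theorem sdBracket_fst (a b : g × Module.Dual K g) : (sdBracket a b).1 = ⁅a.1, b.1⁆ := rfl

@[simp]
theorem sdBracket_snd_apply (a b : g × Module.Dual K g) (z : g) :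
    (sdBracket a b).2 z = a.2 ⁅b.1, z⁆ - b.2 ⁅a.1, z⁆ := by
  simp [sdBracket, neg_add_eq_sub]

@[simp]
theorem Btilde_fst (lam : K) (B : g →ₗ[K] g) (a : g × Module.Dual K g) :
    (Btilde lam B a).1 = B a.1 := rfl

@[simp]
theorem Btilde_snd_apply (lam : K) (B : g →ₗ[K] g) (a : g × Module.Dual K g) (z : g) :
    (Btilde lam B a).2 z = -(lam * a.2 z) - a.2 (B z) := rfl

theorem sdBracket_add_left (a b c : g × Module.Dual K g) :
    sdBracket (a + b) c = sdBracket a c + sdBracket b c := by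
  refine Prod.ext (add_lie _ _ _) (LinearMap.ext fun z => ?_)
  simp only [sdBracket_snd_apply, Prod.fst_add, Prod.snd_add, LinearMap.add_apply, add_lie,
    map_add]
  ring

theorem sdBracket_smul_left (t : K) (a b : g × Module.Dual K g) :
    sdBracket (t • a) b = t • sdBracket a b := by
  refine Prod.ext (smul_lie _ _ _) (LinearMap.ext fun z => ?_)
  simp [mul_sub]

theorem sdBracket_add_right (a b c : g × Module.Dual K g) :
    sdBracket a (b + c) = sdBracket a b + sdBracket a c := by
  refine Prod.ext (lie_add _ _ _) (LinearMap.ext fun z => ?_)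
  simp only [sdBracket_snd_apply, Prod.fst_add, Prod.snd_add, LinearMap.add_apply, add_lie,
    map_add]
  ring

theorem sdBracket_smul_right (t : K) (a b : g × Module.Dual K g) :
    sdBracket a (t • b) = t • sdBracket a b := by
  refine Prod.ext (lie_smul _ _ _) (LinearMap.ext fun z => ?_)
  simp [mul_sub]

theorem sdBracket_self (a : g × Module.Dual K g) : sdBracket a a = 0 :=
  Prod.ext (lie_self _) (LinearMap.ext fun z => by simp)

theorem sdBracket_leibniz (a b c : g × Module.Dual K g) :
    sdBracket a (sdBracket b c) = sdBracket (sdBracket a b) c + sdBracket b (sdBracket a c) := by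
  refine Prod.ext (leibniz_lie _ _ _) (LinearMap.ext fun z => ?_)
  simp only [sdBracket_snd_apply, sdBracket_fst, Prod.snd_add, LinearMap.add_apply, lie_lie,
    map_sub]
  ring

theorem sdBracket_Btilde_Btilde {lam : K} {B : g →ₗ[K] g}
    (hB : ∀ x y : g, ⁅B x, B y⁆ = B (⁅B x, y⁆ + ⁅x, B y⁆ + lam • ⁅x, y⁆))
    (a b : g × Module.Dual K g) :
    sdBracket (Btilde lam B a) (Btilde lam B b) =
      Btilde lam B (sdBracket (Btilde lam B a) b + sdBracket a (Btilde lam B b) +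
        lam • sdBracket a b) := by
  obtain ⟨x, ξ⟩ := a
  obtain ⟨y, η⟩ := b
  refine Prod.ext ?_ (LinearMap.ext fun z => ?_)
  · simpa using hB x y
  · have hη := congrArg η (hB x z)
    have hξ := congrArg ξ (hB y z)
    simp only [map_add, map_smul, smul_eq_mul] at hη hξ
    simp only [Btilde_fst, Btilde_snd_apply, sdBracket_snd_apply, Prod.snd_add, Prod.smul_snd,
      LinearMap.add_apply, LinearMap.smul_apply, smul_eq_mul]
    linear_combination hξ - hη

theorem Spair_comm (a b : g × Module.Dual K g) : Spair a b = Spair b a :=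
  add_comm _ _

theorem eq_zero_of_Spair_eq_zero {a : g × Module.Dual K g}
    (ha : ∀ b : g × Module.Dual K g, Spair a b = 0) : a = 0 := by
  obtain ⟨x, ξ⟩ := a
  have hx : x = 0 :=
    (Module.forall_dual_apply_eq_zero_iff K x).1 fun f => by simpa [Spair] using ha (0, f)
  have hξ : ξ = 0 := LinearMap.ext fun y => by simpa [Spair] using ha (y, 0)
  rw [hx, hξ, Prod.mk_zero_zero]

theorem Spair_sdBracket_add_Spair_sdBracket (a b c : g × Module.Dual K g) :
    Spair (sdBracket a b) c + Spair b (sdBracket a c) = 0 := by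
  simp only [Spair, sdBracket_fst, sdBracket_snd_apply]
  rw [← lie_skew c.1 b.1, map_neg]
  ring

theorem Spair_Btilde_add_Spair_Btilde (lam : K) (B : g →ₗ[K] g) (a b : g × Module.Dual K g) :
    Spair (Btilde lam B a) b + Spair a (Btilde lam B b) + lam * Spair a b = 0 := by
  simp only [Spair, Btilde_fst, Btilde_snd_apply]
  ring

/-- For a Rota–Baxter operator `B` of weight `lam` on `g`:
(a) the semidirect bracket on `g × Dual g` is a Lie bracket; (b) `B̃` is a Rota–Baxter
operator of weight `lam` for it; (c) the pairing `𝒮` is symmetric, nondegenerate,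
invariant and compatible with `B̃`.  Hence `(g ⋉_{ad*} Dual g, B̃, 𝒮)` is a quadratic
Rota–Baxter Lie algebra of weight `lam`. -/
theorem stmt8 (lam : K) (B : g →ₗ[K] g)
    (hB : ∀ x y : g, ⁅B x, B y⁆ = B (⁅B x, y⁆ + ⁅x, B y⁆ + lam • ⁅x, y⁆)) :
    -- (a) the semidirect bracket is a Lie bracket: bilinear, alternating, Jacobi
    (∀ a b c : g × Module.Dual K g,
      sdBracket (a + b) c = sdBracket a c + sdBracket b c) ∧
    (∀ (t : K) (a b : g × Module.Dual K g), sdBracket (t • a) b = t • sdBracket a b) ∧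
    (∀ a b c : g × Module.Dual K g,
      sdBracket a (b + c) = sdBracket a b + sdBracket a c) ∧
    (∀ (t : K) (a b : g × Module.Dual K g), sdBracket a (t • b) = t • sdBracket a b) ∧
    (∀ a : g × Module.Dual K g, sdBracket a a = 0) ∧
    (∀ a b c : g × Module.Dual K g,
      sdBracket a (sdBracket b c) =
        sdBracket (sdBracket a b) c + sdBracket b (sdBracket a c)) ∧
    -- (b) `B̃` is a Rota–Baxter operator of weight `lam`
    (∀ a b : g × Module.Dual K g,
      sdBracket (Btilde lam B a) (Btilde lam B b) =
        Btilde lam B (sdBracket (Btilde lam B a) b + sdBracket a (Btilde lam B b) +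
          lam • sdBracket a b)) ∧
    -- (c) `𝒮` is symmetric, nondegenerate, invariant, compatible with `B̃`
    (∀ a b : g × Module.Dual K g, Spair a b = Spair b a) ∧
    (∀ a : g × Module.Dual K g, (∀ b : g × Module.Dual K g, Spair a b = 0) → a = 0) ∧
    (∀ a b c : g × Module.Dual K g,
      Spair (sdBracket a b) c + Spair b (sdBracket a c) = 0) ∧
    (∀ a b : g × Module.Dual K g,
      Spair (Btilde lam B a) b + Spair a (Btilde lam B b) + lam * Spair a b = 0) := by
  exact ⟨sdBracket_add_left, sdBracket_smul_left, sdBracket_add_right, sdBracket_smul_right,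
    sdBracket_self, sdBracket_leibniz, sdBracket_Btilde_Btilde hB, Spair_comm,
    fun _ => eq_zero_of_Spair_eq_zero, Spair_sdBracket_add_Spair_sdBracket,
    Spair_Btilde_add_Spair_Btilde lam B⟩
end

section
/- Let B be a Rota–Baxter operator of weight λ on a Lie algebra g over a field and let τ : g → g be a Lie algebra automorphism. Define τ̃ : g × Dual(g) → g × Dual(g) by τ̃(x,ξ) := (τx, −ξ∘τ). Then τ̃ is a reflection on the quadratic Rota–Baxter Lie algebra (g ⋉_{ad*} Dual(g), B̃, 𝒮) — meaning that τ̃ preserves the semidirect bracket, (τ̃−id)∘(B̃+λ·id)∘(τ̃+id) = 0, and 𝒮(τ̃a,b) + 𝒮(a,τ̃b) = 0 for all a,b — if and only if τ is a reflection on the Rota–Baxter Lie algebra (g,B), i.e. τ⁅τx,y⁆ = ⁅x,τy⁆ for all x,y, λ·(τ∘τ − id) = 0, and τ∘B∘τ − B + τ∘B − B∘τ = 0. -/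
/-!
Every condition on `τ̃` is read off componentwise. `τ̃` is always bijective (with inverse
`(τ⁻¹)~`) and always skew for `𝒮`. On dual components, `τ̃` preserves the semidirect bracket
exactly when `η(τ⁅τx, z⁆) = η⁅x, τz⁆` for all `η`, i.e. when `τ⁅τx, y⁆ = ⁅x, τy⁆`. Writing
`D := τBτ − B + τB − Bτ`, the defect `(τ̃ − id)(B̃ + λ)(τ̃ + id)(x, ξ)` equals
`(D x + λ(τ²x − x), −ξ ∘ D)`; its second component forces `D = 0`, and then the first forces
`λ(τ² − id) = 0`.
-/

variable {K : Type*} [Field K] {g : Type*} [LieRing g] [LieAlgebra K g]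

/-- `τ̃(x,ξ) = (τx, −ξ∘τ)` on `g × Dual g`. -/
noncomputable def tauTilde (τ : g ≃ₗ[K] g) (a : g × Module.Dual K g) :
    g × Module.Dual K g :=
  (τ a.1, -(a.2 ∘ₗ (τ : g →ₗ[K] g)))

theorem tauTilde_tauTilde_symm (τ : g ≃ₗ[K] g) (a : g × Module.Dual K g) :
    tauTilde τ (tauTilde τ.symm a) = a := by
  refine Prod.ext (by simp [tauTilde]) ?_
  ext z
  simp [tauTilde]

theorem tauTilde_bijective (τ : g ≃ₗ[K] g) : Function.Bijective (tauTilde (K := K) τ) := by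
  refine Function.bijective_iff_has_inverse.mpr ⟨tauTilde τ.symm, fun a => ?_, fun a => ?_⟩
  · simpa using tauTilde_tauTilde_symm τ.symm a
  · exact tauTilde_tauTilde_symm τ a

theorem Spair_tauTilde_add_Spair_tauTilde (τ : g ≃ₗ[K] g) (a b : g × Module.Dual K g) :
    Spair (tauTilde τ a) b + Spair a (tauTilde τ b) = 0 := by
  simp [Spair, tauTilde]
  ring

theorem tauTilde_sdBracket_snd_apply (τ : g ≃ₗ[K] g) (a b : g × Module.Dual K g) (z : g) :
    (tauTilde τ (sdBracket a b)).2 z = b.2 ⁅a.1, τ z⁆ - a.2 ⁅b.1, τ z⁆ := by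
  simp [tauTilde, sdBracket, coad]
  ring

theorem sdBracket_tauTilde_snd_apply (τ : g ≃ₗ[K] g) (a b : g × Module.Dual K g) (z : g) :
    (sdBracket (tauTilde τ a) (tauTilde τ b)).2 z =
      b.2 (τ ⁅τ a.1, z⁆) - a.2 (τ ⁅τ b.1, z⁆) := by
  simp [tauTilde, sdBracket, coad]

theorem tauTilde_sdBracket_iff (τ : g ≃ₗ[K] g) (hτ : ∀ x y : g, τ ⁅x, y⁆ = ⁅τ x, τ y⁆) :
    (∀ a b : g × Module.Dual K g,
        tauTilde τ (sdBracket a b) = sdBracket (tauTilde τ a) (tauTilde τ b)) ↔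
      ∀ x y : g, τ ⁅τ x, y⁆ = ⁅x, τ y⁆ := by
  constructor
  · intro h x y
    rw [← sub_eq_zero, ← Module.forall_dual_apply_eq_zero_iff K]
    intro η
    have hη := congrArg (fun p => p.2 y) (h (x, 0) (0, η))
    simp only [tauTilde_sdBracket_snd_apply, sdBracket_tauTilde_snd_apply,
      LinearMap.zero_apply, sub_zero] at hη
    rw [map_sub, hη, sub_self]
  · intro h a b
    refine Prod.ext (hτ a.1 b.1) (LinearMap.ext fun z => ?_)
    rw [tauTilde_sdBracket_snd_apply, sdBracket_tauTilde_snd_apply, h, h]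

theorem tauTilde_Btilde_fst (lam : K) (B : g →ₗ[K] g) (τ : g ≃ₗ[K] g)
    (a : g × Module.Dual K g) :
    (tauTilde τ (Btilde lam B (tauTilde τ a + a) + lam • (tauTilde τ a + a)) -
        (Btilde lam B (tauTilde τ a + a) + lam • (tauTilde τ a + a))).1 =
      (τ (B (τ a.1)) - B a.1 + τ (B a.1) - B (τ a.1)) + lam • (τ (τ a.1) - a.1) := by
  simp only [tauTilde, Btilde, Prod.fst_sub, Prod.fst_add, Prod.smul_fst, map_add, map_smul]
  module

theorem tauTilde_Btilde_snd_apply (lam : K) (B : g →ₗ[K] g) (τ : g ≃ₗ[K] g)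
    (a : g × Module.Dual K g) (z : g) :
    (tauTilde τ (Btilde lam B (tauTilde τ a + a) + lam • (tauTilde τ a + a)) -
        (Btilde lam B (tauTilde τ a + a) + lam • (tauTilde τ a + a))).2 z =
      -a.2 (τ (B (τ z)) - B z + τ (B z) - B (τ z)) := by
  simp [tauTilde, Btilde]
  ring

theorem tauTilde_Btilde_iff (lam : K) (B : g →ₗ[K] g) (τ : g ≃ₗ[K] g) :
    (∀ a : g × Module.Dual K g,
        tauTilde τ (Btilde lam B (tauTilde τ a + a) + lam • (tauTilde τ a + a)) -
          (Btilde lam B (tauTilde τ a + a) + lam • (tauTilde τ a + a)) = 0) ↔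
      (∀ x : g, lam • (τ (τ x) - x) = 0) ∧
        ∀ x : g, τ (B (τ x)) - B x + τ (B x) - B (τ x) = 0 := by
  constructor
  · intro h
    have hD : ∀ x : g, τ (B (τ x)) - B x + τ (B x) - B (τ x) = 0 := fun x => by
      rw [← Module.forall_dual_apply_eq_zero_iff K]
      intro ξ
      have hξ := congrArg (fun p => p.2 x) (h (0, ξ))
      simp only [tauTilde_Btilde_snd_apply, Prod.snd_zero, LinearMap.zero_apply,
        neg_eq_zero] at hξ
      exact hξ
    refine ⟨fun x => ?_, hD⟩
    have hx := congrArg Prod.fst (h (x, 0))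
    rwa [tauTilde_Btilde_fst, hD, zero_add] at hx
  · rintro ⟨hlam, hD⟩ a
    refine Prod.ext ?_ (LinearMap.ext fun z => ?_)
    · rw [tauTilde_Btilde_fst, hD, hlam, add_zero, Prod.fst_zero]
    · rw [tauTilde_Btilde_snd_apply, hD, map_zero, neg_zero, Prod.snd_zero, LinearMap.zero_apply]

theorem stmt10_general (lam : K) (B : g →ₗ[K] g)
    (τ : g ≃ₗ[K] g)
    (hτbr : ∀ x y : g, τ ⁅x, y⁆ = ⁅τ x, τ y⁆) :
    -- `τ̃` is a reflection on `(g ⋉_{ad*} Dual g, B̃, 𝒮)` ...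
    (Function.Bijective (tauTilde (K := K) τ) ∧
     (∀ a b : g × Module.Dual K g,
        tauTilde τ (sdBracket a b) = sdBracket (tauTilde τ a) (tauTilde τ b)) ∧
     (∀ a : g × Module.Dual K g,
        tauTilde τ (Btilde lam B (tauTilde τ a + a) + lam • (tauTilde τ a + a)) -
          (Btilde lam B (tauTilde τ a + a) + lam • (tauTilde τ a + a)) = 0) ∧
     (∀ a b : g × Module.Dual K g,
        Spair (tauTilde τ a) b + Spair a (tauTilde τ b) = 0)) ↔
    -- ... iff `τ` is a reflection on `(g,B)`
    ((∀ x y : g, τ ⁅τ x, y⁆ = ⁅x, τ y⁆) ∧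
     (∀ x : g, lam • (τ (τ x) - x) = 0) ∧
     (∀ x : g, τ (B (τ x)) - B x + τ (B x) - B (τ x) = 0)) := by
  rw [tauTilde_sdBracket_iff τ hτbr, tauTilde_Btilde_iff]
  simp only [tauTilde_bijective, Spair_tauTilde_add_Spair_tauTilde, implies_true, true_and,
    and_true]

/-- For a Rota–Baxter operator `B` of weight `lam` on `g` and a Lie
algebra automorphism `τ` of `g`, the map `τ̃(x,ξ) = (τx, −ξ∘τ)` is a reflection on the
quadratic Rota–Baxter Lie algebra `(g ⋉_{ad*} Dual g, B̃, 𝒮)` if and only if `τ` is a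
reflection on the Rota–Baxter Lie algebra `(g,B)`. -/
theorem stmt10 (lam : K) (B : g →ₗ[K] g)
    (hB : ∀ x y : g, ⁅B x, B y⁆ = B (⁅B x, y⁆ + ⁅x, B y⁆ + lam • ⁅x, y⁆))
    (τ : g ≃ₗ[K] g)
    (hτbr : ∀ x y : g, τ ⁅x, y⁆ = ⁅τ x, τ y⁆) :
    -- `τ̃` is a reflection on `(g ⋉_{ad*} Dual g, B̃, 𝒮)` ...
    (Function.Bijective (tauTilde (K := K) τ) ∧
     (∀ a b : g × Module.Dual K g,
        tauTilde τ (sdBracket a b) = sdBracket (tauTilde τ a) (tauTilde τ b)) ∧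
     (∀ a : g × Module.Dual K g,
        tauTilde τ (Btilde lam B (tauTilde τ a + a) + lam • (tauTilde τ a + a)) -
          (Btilde lam B (tauTilde τ a + a) + lam • (tauTilde τ a + a)) = 0) ∧
     (∀ a b : g × Module.Dual K g,
        Spair (tauTilde τ a) b + Spair a (tauTilde τ b) = 0)) ↔
    -- ... iff `τ` is a reflection on `(g,B)`
    ((∀ x y : g, τ ⁅τ x, y⁆ = ⁅x, τ y⁆) ∧
     (∀ x : g, lam • (τ (τ x) - x) = 0) ∧
     (∀ x : g, τ (B (τ x)) - B x + τ (B x) - B (τ x) = 0)) :=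
  stmt10_general lam B τ hτbr
end
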